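/- Let p be an odd prime, n ≥ 2, 1 ≤ k ≤ n−1, and let a be an integer coprime to p. Then the (a·p^k mod p^n)-monomial minimal solution of (E_{p^n}) has size 2·p^{n−k} and satisfies M_{2p^{n−k}}(a·p^k, …, a·p^k) = −Id over Z/p^nZ. Moreover, setting x = a·p^k − 2a·p^{n−1}, one has M_{4p^{n−k−1}}(x, a·p^k, …, a·p^k, x) = Id over Z/p^nZ, where the tuple has first and last entries x and 4p^{n−k−1} − 2 middle entries equal to a·p^k. -/

import Mathlib

/-!
Put `c = a p^k` and `A = genMat c`. By Cayley–Hamilton `A² = -(1 - c A)`, and since `p` is odd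
and `p^k ∣ c`, `(1 + p^k x)^(p^j) ≡ 1 + p^(k+j) x mod p^(k+j+1)` (the binomial step of
lifting the exponent). Taking `j = n - k - 1` gives `A^(2p^(n-k-1)) = -(1 - e A)` with
`e = a p^(n-1)`; as `e² = p e = 0`, this yields `A^(2p^(n-k)) = -1` and
`A^(4p^(n-k-1)) = 1 - 2e A ≠ 1`, so `A` has order exactly `4p^(n-k)`, which pins the monomial
size at `2p^(n-k)`. For the last identity, `A^(4p^(n-k-1)-2)` is computed by inverting `A²`
explicitly, and the two outer factors `genMat (c - 2e)` cancel it because `2e` kills both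
itself and `c`.
-/

open Matrix

/-- The elementary matrix `[[a, -1], [1, 0]]` over `ZMod N`. -/
def genMat {N : ℕ} (a : ZMod N) : Matrix (Fin 2) (Fin 2) (ZMod N) :=
  !![a, -1; 1, 0]

/-- `Mword [a₁, …, aₙ]` is the matrix `Mₙ(a₁, …, aₙ) = genMat aₙ * ⋯ * genMat a₁`. -/
def Mword {N : ℕ} (l : List (ZMod N)) : Matrix (Fin 2) (Fin 2) (ZMod N) :=
  (l.reverse.map genMat).prod

/-- A tuple (encoded as a list) is a solution of `(E_N)` if its matrix is `±Id`. -/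
def IsSolutionE {N : ℕ} (l : List (ZMod N)) : Prop :=
  Mword l = 1 ∨ Mword l = -1

/-- The size of the `k`-monomial minimal solution of `(E_N)`: the least positive `n`
such that the constant `n`-tuple `(k, …, k)` is a solution of `(E_N)`. -/
noncomputable def monomialSize (N : ℕ) (k : ZMod N) : ℕ :=
  sInf {n : ℕ | 0 < n ∧ IsSolutionE (List.replicate n k)}

/-- The `k`-monomial minimal solution of `(E_N)`. -/
noncomputable def monoSol (N : ℕ) (k : ZMod N) : List (ZMod N) :=
  List.replicate (monomialSize N k) k

/-- The sum `⊕` of two tuples: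
`(a₁,…,aₘ) ⊕ (b₁,…,bₗ) = (a₁+bₗ, a₂, …, aₘ₋₁, aₘ+b₁, b₂, …, bₗ₋₁)`. -/
def oplus {N : ℕ} (a b : List (ZMod N)) : List (ZMod N) :=
  (a.headD 0 + b.getLastD 0) ::
    ((a.drop 1).dropLast ++ (a.getLastD 0 + b.headD 0) :: (b.drop 1).dropLast)

/-- Two tuples are equivalent (`∼`) if one is obtained from the other by a cyclic
permutation, possibly composed with order reversal. -/
def TupEquiv {N : ℕ} (c d : List (ZMod N)) : Prop :=
  (∃ i, d = c.rotate i) ∨ (∃ i, d = c.reverse.rotate i)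

/-- A tuple is reducible if it is equivalent to a sum `a ⊕ b` where `b` is a solution of
`(E_N)` and both `a`, `b` have length at least `3`. -/
def IsReducibleE {N : ℕ} (c : List (ZMod N)) : Prop :=
  ∃ a b : List (ZMod N), 3 ≤ a.length ∧ 3 ≤ b.length ∧ IsSolutionE b ∧
    TupEquiv c (oplus a b)

/-- An irreducible solution of `(E_N)`: a solution of size at least `3` that is not
reducible (the solution `(0,0)` is not considered irreducible). -/
def IsIrreducibleE {N : ℕ} (c : List (ZMod N)) : Prop :=
  IsSolutionE c ∧ 3 ≤ c.length ∧ ¬ IsReducibleE c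

/-- A reducible solution of `(E_N)`: a solution that is not irreducible. -/
def IsReducibleSol {N : ℕ} (c : List (ZMod N)) : Prop :=
  IsSolutionE c ∧ ¬ IsIrreducibleE c

/-- `N` is monomially irreducible if for every nonzero `k ∈ ZMod N` the `k`-monomial
minimal solution of `(E_N)` is irreducible. -/
def MonomiallyIrreducible (N : ℕ) : Prop :=
  ∀ k : ZMod N, k ≠ 0 → IsIrreducibleE (monoSol N k)

/-- `N` is quasi monomially irreducible if for every integer `k` coprime to `N` the
`(k mod N)`-monomial minimal solution of `(E_N)` is irreducible. -/
def QuasiMonomiallyIrreducible (N : ℕ) : Prop :=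
  ∀ k : ℤ, Int.gcd k (N : ℤ) = 1 → IsIrreducibleE (monoSol N (k : ZMod N))

/-- `N` is semi monomially irreducible: if `N` is even but not divisible by `4`, this
requires that for every integer `a` coprime to `N/2` the `(2a mod N)`-monomial minimal
solution of `(E_N)` is irreducible; otherwise (i.e. `N` odd or divisible by `4`), it
requires the same for every integer `a` coprime to `N`. -/
def SemiMonomiallyIrreducible (N : ℕ) : Prop :=
  if 2 ∣ N ∧ ¬ (4 ∣ N) then
    ∀ a : ℤ, Int.gcd a ((N / 2 : ℕ) : ℤ) = 1 →
      IsIrreducibleE (monoSol N ((2 * a : ℤ) : ZMod N))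
  else
    ∀ a : ℤ, Int.gcd a (N : ℤ) = 1 →
      IsIrreducibleE (monoSol N ((2 * a : ℤ) : ZMod N))


section OddPow

variable {R : Type*} [CommRing R] {p : ℕ}

theorem Odd.pow_dvd_one_add_pow_mul_pow_sub (hp : Odd p) {m : ℕ} (hm : 1 ≤ m) (w : R) :
    (p : R) ^ (m + 2) ∣ (1 + p ^ m * w) ^ p - (1 + p ^ (m + 1) * w) := by
  obtain ⟨m, rfl⟩ := Nat.exists_eq_add_of_le' hm
  obtain ⟨r, hr⟩ := odd_sq_dvd_geom_sum₂_sub 1 ((p : R) ^ m * w) hp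
  have hgeom := geom_sum₂_mul (1 + p * (p ^ m * w)) 1 p
  simp only [one_pow, mul_one] at hr hgeom
  refine ⟨w * r, ?_⟩
  linear_combination (p : R) ^ (m + 1) * w * hr - hgeom

theorem Odd.pow_dvd_one_add_pow_mul_pow_pow_sub (hp : Odd p) {m : ℕ} (hm : 1 ≤ m) (w : R)
    (j : ℕ) : (p : R) ^ (m + j + 1) ∣ (1 + p ^ m * w) ^ p ^ j - (1 + p ^ (m + j) * w) := by
  induction j with
  | zero => simp
  | succ j ih =>
    obtain ⟨y, hy⟩ := ih
    obtain ⟨z, hz⟩ := hp.pow_dvd_one_add_pow_mul_pow_sub (m := m + j) (by omega) (w + p * y)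
    refine ⟨z + y, ?_⟩
    rw [pow_succ, pow_mul, sub_eq_iff_eq_add.mp hy]
    linear_combination hz

end OddPow

theorem Odd.one_add_pow_mul_pow_pow {S : Type*} [Ring S] {p : ℕ} (hp : Odd p) {m : ℕ}
    (hm : 1 ≤ m) (j : ℕ) (hS : (p : S) ^ (m + j + 1) = 0) (x : S) :
    (1 + p ^ m * x) ^ p ^ j = 1 + p ^ (m + j) * x := by
  obtain ⟨q, hq⟩ := hp.pow_dvd_one_add_pow_mul_pow_pow_sub hm (Polynomial.X : Polynomial ℤ) j
  have := congrArg (Polynomial.aeval x) hq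
  simp only [map_sub, map_pow, map_add, map_one, map_mul, map_natCast, Polynomial.aeval_X,
    hS, zero_mul] at this
  exact sub_eq_zero.mp this

section genMat

variable {N : ℕ}

theorem Mword_replicate (m : ℕ) (x : ZMod N) : Mword (List.replicate m x) = genMat x ^ m := by
  rw [Mword, List.reverse_replicate, List.map_replicate, List.prod_replicate]

theorem Mword_cons_replicate_append (x c : ZMod N) (r : ℕ) :
    Mword (x :: (List.replicate r c ++ [x])) = genMat x * genMat c ^ r * genMat x := by
  simp [Mword, List.prod_replicate, mul_assoc]

theorem genMat_sq (c : ZMod N) : genMat c ^ 2 = c • genMat c - 1 := by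
  ext i j
  fin_cases i <;> fin_cases j <;> simp [genMat, sq, sub_eq_add_neg]

theorem one_sub_smul_genMat_pow {c e : ZMod N} (he : e * e = 0) (m : ℕ) :
    (1 - e • genMat c) ^ m = 1 - (m * e) • genMat c := by
  induction m with
  | zero => simp
  | succ m ih =>
    rw [pow_succ, ih]
    simp only [sub_mul, mul_sub, one_mul, mul_one, smul_mul_smul, mul_assoc, he, mul_zero,
      zero_smul, sub_zero, Nat.cast_succ, add_mul, add_smul]
    abel

theorem one_sub_smul_genMat_ne_one {c e : ZMod N} (he : e ≠ 0) : 1 - e • genMat c ≠ 1 := by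
  intro h
  exact he (by simpa [genMat] using congrFun (congrFun (sub_eq_self.1 h) 1) 0)

theorem genMat_mul_mul_genMat (x y : ZMod N) :
    genMat x * !![-1, x; -x, y] * genMat x = !![x ^ 2 - y, 0; 0, 1] := by
  ext i j
  fin_cases i <;> fin_cases j <;>
    simp [genMat, Matrix.mul_apply, Fin.sum_univ_two, sq, sub_eq_add_neg]

theorem Mword_cons_replicate_append_sub_eq_one {c d : ZMod N} (hdc : d * c = 0)
    (hdd : d * d = 0) {m : ℕ} (hm : 2 ≤ m) (hA : genMat c ^ m = 1 - d • genMat c) :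
    Mword ((c - d) :: (List.replicate (m - 2) c ++ [c - d])) = 1 := by
  have hinv : genMat c * !![0, 1; -1, c] = 1 := by
    ext i j
    fin_cases i <;> fin_cases j <;> simp [genMat]
  have hinv2 : genMat c ^ 2 * !![0, 1; -1, c] ^ 2 = 1 := by
    rw [sq, sq, mul_assoc, ← mul_assoc (genMat c) !![0, 1; -1, c], hinv, one_mul, hinv]
  have hpow : genMat c ^ (m - 2) = !![-1, c - d; -(c - d), c ^ 2 - 1 - d * c] :=
    calc genMat c ^ (m - 2) = genMat c ^ (m - 2) * (genMat c ^ 2 * !![0, 1; -1, c] ^ 2) := by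
          rw [hinv2, mul_one]
      _ = (1 - d • genMat c) * !![0, 1; -1, c] ^ 2 := by
          rw [← mul_assoc, ← pow_add, Nat.sub_add_cancel hm, hA]
      _ = !![-1, c - d; -(c - d), c ^ 2 - 1 - d * c] := by
          ext i j
          fin_cases i <;> fin_cases j <;>
            simp [genMat, sq, Matrix.mul_apply, Fin.sum_univ_two] <;> ring
  rw [Mword_cons_replicate_append, hpow, genMat_mul_mul_genMat,
    show (c - d) ^ 2 - (c ^ 2 - 1 - d * c) = 1 by linear_combination hdd - hdc, Matrix.one_fin_two]

theorem monomialSize_eq_of_orderOf {c : ZMod N} {q : ℕ} (hq : 0 < q) (hA : genMat c ^ q = -1)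
    (hord : orderOf (genMat c) = 2 * q) : monomialSize N c = q := by
  have hsol (m : ℕ) :
      IsSolutionE (List.replicate m c) ↔ genMat c ^ m = 1 ∨ genMat c ^ m = -1 := by
    rw [IsSolutionE, Mword_replicate]
  have hqmem : q ∈ {m : ℕ | 0 < m ∧ IsSolutionE (List.replicate m c)} :=
    ⟨hq, (hsol q).2 (Or.inr hA)⟩
  refine le_antisymm (Nat.sInf_le hqmem) (le_csInf ⟨q, hqmem⟩ ?_)
  rintro m ⟨hm, hmsol⟩
  have hsq : genMat c ^ (2 * m) = 1 := by
    rcases (hsol m).1 hmsol with h | h <;> simp [mul_comm 2 m, pow_mul, h]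
  have hdvd := orderOf_dvd_of_pow_eq_one hsq
  rw [hord] at hdvd
  exact Nat.le_of_dvd hm (Nat.dvd_of_mul_dvd_mul_left two_pos hdvd)

end genMat

theorem orderOf_eq_four_mul_prime_pow {G : Type*} [Monoid G] {x : G} {p s : ℕ} (hp : p.Prime)
    (hs : 1 ≤ s) (hx : x ^ (4 * p ^ s) = 1) (hx2 : x ^ (2 * p ^ s) ≠ 1)
    (hxp : x ^ (4 * p ^ (s - 1)) ≠ 1) : orderOf x = 4 * p ^ s := by
  refine orderOf_eq_of_pow_and_pow_div_prime (by positivity [hp.pos]) hx fun q hq hdvd => ?_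
  rcases hq.dvd_mul.1 hdvd with h4 | hps
  · obtain rfl : q = 2 :=
      (Nat.prime_dvd_prime_iff_eq hq Nat.prime_two).1 (hq.dvd_of_dvd_pow (n := 2) h4)
    rwa [show 4 * p ^ s / 2 = 2 * p ^ s by omega]
  · obtain rfl : q = p := (Nat.prime_dvd_prime_iff_eq hq hp).1 (hq.dvd_of_dvd_pow hps)
    rwa [← Nat.sub_add_cancel hs, pow_succ, ← mul_assoc, Nat.mul_div_cancel _ hp.pos]

section PrimePower

variable {p n : ℕ}

theorem intCast_mul_pow_eq_zero (x : ℤ) {i : ℕ} (hi : n ≤ i) :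
    ((x * p ^ i : ℤ) : ZMod (p ^ n)) = 0 := by
  rw [ZMod.intCast_zmod_eq_zero_iff_dvd]
  push_cast
  exact (pow_dvd_pow _ hi).mul_left x

theorem intCast_mul_pow_pred_ne_zero (hp : p.Prime) (hn : 1 ≤ n) {x : ℤ}
    (hx : ¬(p : ℤ) ∣ x) :
    ((x * p ^ (n - 1) : ℤ) : ZMod (p ^ n)) ≠ 0 := by
  rw [Ne, ZMod.intCast_zmod_eq_zero_iff_dvd]
  push_cast
  rw [← Nat.sub_add_cancel hn, pow_succ, Nat.add_sub_cancel, mul_comm x,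
    mul_dvd_mul_iff_left (pow_ne_zero _ (Int.natCast_ne_zero.2 hp.ne_zero))]
  exact hx

theorem Nat.Prime.not_intCast_dvd_two_mul (hp : p.Prime) (hodd : Odd p) {a : ℤ}
    (ha : Int.gcd a p = 1) : ¬(p : ℤ) ∣ 2 * a := by
  have h2 : IsCoprime (2 : ℤ) p := by
    exact_mod_cast Nat.isCoprime_iff_coprime.2 hodd.coprime_two_left
  exact fun h => (Nat.prime_iff_prime_int.1 hp).not_isUnit <|
    (h2.mul_left (Int.isCoprime_iff_gcd_eq_one.2 ha)).isUnit_of_dvd' h dvd_rfl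

variable {k : ℕ} {a : ℤ}

theorem genMat_pow_two_mul_pow_pred (hp : Odd p) (hk : 1 ≤ k) (hkn : k ≤ n - 1) :
    genMat ((a * p ^ k : ℤ) : ZMod (p ^ n)) ^ (2 * p ^ (n - k - 1)) =
      -(1 - ((a * p ^ (n - 1) : ℤ) : ZMod (p ^ n)) •
        genMat ((a * p ^ k : ℤ) : ZMod (p ^ n))) := by
  set A := genMat ((a * p ^ k : ℤ) : ZMod (p ^ n))
  have hchar : (p : Matrix (Fin 2) (Fin 2) (ZMod (p ^ n))) ^ (k + (n - k - 1) + 1) = 0 := by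
    rw [← Nat.cast_pow, show k + (n - k - 1) + 1 = n by omega, CharP.cast_eq_zero]
  have hsmul (i : ℕ) :
      1 + (p : Matrix (Fin 2) (Fin 2) (ZMod (p ^ n))) ^ i * -((a : ZMod (p ^ n)) • A) =
        1 - ((a * p ^ i : ℤ) : ZMod (p ^ n)) • A := by
    rw [← Nat.cast_pow, ← nsmul_eq_mul, ← Nat.cast_smul_eq_nsmul (ZMod (p ^ n)), smul_neg,
      smul_smul, sub_eq_add_neg]
    push_cast
    ring_nf
  have hu := hp.one_add_pow_mul_pow_pow hk (n - k - 1) hchar (-((a : ZMod (p ^ n)) • A))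
  rw [hsmul, hsmul, show k + (n - k - 1) = n - 1 by omega] at hu
  rw [pow_mul, genMat_sq, ← neg_sub, hp.pow.neg_pow, hu]

theorem intCast_mul_pow_pred_mul_self (hn : 2 ≤ n) (x : ℤ) :
    ((x * p ^ (n - 1) : ℤ) : ZMod (p ^ n)) * ((x * p ^ (n - 1) : ℤ) : ZMod (p ^ n)) = 0 := by
  rw [← Int.cast_mul, show x * p ^ (n - 1) * (x * p ^ (n - 1)) = x * x * p ^ (n - 1 + (n - 1)) by
    ring, intCast_mul_pow_eq_zero _ (by omega)]

theorem genMat_pow_two_mul_pow (hp : Odd p) (hn : 2 ≤ n) (hk : 1 ≤ k) (hkn : k ≤ n - 1) :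
    genMat ((a * p ^ k : ℤ) : ZMod (p ^ n)) ^ (2 * p ^ (n - k)) = -1 := by
  have hpe : (p : ZMod (p ^ n)) * ((a * p ^ (n - 1) : ℤ) : ZMod (p ^ n)) = 0 := by
    rw [← intCast_mul_pow_eq_zero (p := p) a (show n ≤ n - 1 + 1 by omega)]
    push_cast
    ring
  rw [show n - k = n - k - 1 + 1 by omega, pow_succ, ← mul_assoc, pow_mul,
    genMat_pow_two_mul_pow_pred hp hk hkn, hp.neg_pow,
    one_sub_smul_genMat_pow (intCast_mul_pow_pred_mul_self hn a), hpe, zero_smul, sub_zero]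

theorem genMat_pow_four_mul_pow_pred (hp : Odd p) (hn : 2 ≤ n) (hk : 1 ≤ k)
    (hkn : k ≤ n - 1) :
    genMat ((a * p ^ k : ℤ) : ZMod (p ^ n)) ^ (4 * p ^ (n - k - 1)) =
      1 - ((2 * a * p ^ (n - 1) : ℤ) : ZMod (p ^ n)) •
        genMat ((a * p ^ k : ℤ) : ZMod (p ^ n)) := by
  rw [show 4 * p ^ (n - k - 1) = 2 * p ^ (n - k - 1) * 2 by ring, pow_mul,
    genMat_pow_two_mul_pow_pred hp hk hkn, neg_sq,
    one_sub_smul_genMat_pow (intCast_mul_pow_pred_mul_self hn a)]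
  push_cast
  ring_nf

end PrimePower

/-- for `p` an odd prime, `n ≥ 2`, `1 ≤ k ≤ n - 1` and `a` coprime to `p`,
the `(a·p^k mod p^n)`-monomial minimal solution of `(E_{p^n})` has size `2·p^(n-k)`, its
matrix is `-Id`, and with `x = a·p^k - 2a·p^(n-1)`, the `4p^(n-k-1)`-tuple
`(x, a·p^k, …, a·p^k, x)` has matrix `Id` over `ZMod (p^n)`. -/
theorem stmt_16 (p : ℕ) (hp : p.Prime) (hodd : Odd p) (n : ℕ) (hn : 2 ≤ n)
    (k : ℕ) (hk1 : 1 ≤ k) (hk2 : k ≤ n - 1) (a : ℤ) (ha : Int.gcd a (p : ℤ) = 1) :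
    monomialSize (p ^ n) ((a * p ^ k : ℤ) : ZMod (p ^ n)) = 2 * p ^ (n - k) ∧
    Mword (List.replicate (2 * p ^ (n - k)) ((a * p ^ k : ℤ) : ZMod (p ^ n))) = -1 ∧
    Mword (((a * p ^ k - 2 * a * p ^ (n - 1) : ℤ) : ZMod (p ^ n)) ::
      (List.replicate (4 * p ^ (n - k - 1) - 2) ((a * p ^ k : ℤ) : ZMod (p ^ n)) ++
        [((a * p ^ k - 2 * a * p ^ (n - 1) : ℤ) : ZMod (p ^ n))])) = 1 := by
  set c : ZMod (p ^ n) := ((a * p ^ k : ℤ) : ZMod (p ^ n))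
  have hA := genMat_pow_two_mul_pow (a := a) hodd hn hk1 hk2
  have hA4 := genMat_pow_four_mul_pow_pred (a := a) hodd hn hk1 hk2
  have hp2 : 2 < p := by have := hp.two_le; have := Nat.odd_iff.1 hodd; omega
  have : Fact (2 < p ^ n) := ⟨hp2.trans_le (Nat.le_self_pow (by omega) p)⟩
  have hord : orderOf (genMat c) = 2 * (2 * p ^ (n - k)) := by
    rw [← mul_assoc]
    refine orderOf_eq_four_mul_prime_pow hp (by omega) ?_ ?_ ?_
    · rw [show 4 = 2 * 2 by rfl, mul_assoc, pow_mul', hA, neg_one_sq]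
    · rw [hA]
      exact fun h => ZMod.neg_one_ne_one (by simpa using congrFun (congrFun h 0) 0)
    · rw [hA4]
      exact one_sub_smul_genMat_ne_one
        (intCast_mul_pow_pred_ne_zero hp (by omega) (hp.not_intCast_dvd_two_mul hodd ha))
  refine ⟨monomialSize_eq_of_orderOf (by have := hp.pos; positivity) hA hord,
    by rw [Mword_replicate, hA], ?_⟩
  have hdc : ((2 * a * p ^ (n - 1) : ℤ) : ZMod (p ^ n)) * c = 0 := by
    rw [← Int.cast_mul, show 2 * a * p ^ (n - 1) * (a * p ^ k) = 2 * a * a * p ^ (n - 1 + k) by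
      ring]
    exact intCast_mul_pow_eq_zero _ (by omega)
  rw [Int.cast_sub]
  exact Mword_cons_replicate_append_sub_eq_one hdc (intCast_mul_pow_pred_mul_self hn (2 * a))
    (by have := pow_pos hp.pos (n - k - 1); omega) hA4
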